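/- arXiv:2102.06375 — 2 statements merged into one kernel-verified Lean document; each statement's English description precedes it below -/
import Mathlib

section
/- Let φ : Ω × [0,T) → ℝ be a smooth solution of ε φ_t = ε Δφ - W'(φ)/ε + g√(2W(φ)) on the torus Ω = (ℝ/ℤ)^d with |g| ≤ d/R₀. Then d/dt ∫_Ω (ε|∇φ|²/2 + W(φ)/ε) dx + (1/2)∫_Ω ε(-Δφ + W'(φ)/ε²)² dx ≤ (d²/R₀²) ∫_Ω W(φ)/ε dx. -/
open MeasureTheory

/-- Laplacian of `f : ℝ^d → ℝ` as the sum of second partial derivatives. -/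
noncomputable def lap {d : ℕ} (f : EuclideanSpace ℝ (Fin d) → ℝ)
    (x : EuclideanSpace ℝ (Fin d)) : ℝ :=
  ∑ i : Fin d, fderiv ℝ (fun y => fderiv ℝ f y (EuclideanSpace.single i 1)) x
    (EuclideanSpace.single i 1)

/-- The fundamental cube `[0,1]^d`, representing the torus `(ℝ/ℤ)^d`. -/
def cube (d : ℕ) : Set (EuclideanSpace ℝ (Fin d)) :=
  {x | ∀ i, x i ∈ Set.Icc (0 : ℝ) 1}

section helpers

lemma cube_eq (d : ℕ) :
    cube d = (MeasurableEquiv.toLp 2 (Fin d → ℝ)).symm ⁻¹' (Set.Icc 0 1) := by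
  ext x
  simp [cube, Set.mem_Icc, Pi.le_def, forall_and]

lemma isCompact_cube (d : ℕ) : IsCompact (cube d) := by
  have h : cube d = (EuclideanSpace.equiv (Fin d) ℝ).symm.toHomeomorph '' (Set.Icc 0 1) := by
    rw [cube_eq]
    ext x
    constructor
    · intro hx; exact ⟨(MeasurableEquiv.toLp 2 (Fin d → ℝ)).symm x, hx, rfl⟩
    · rintro ⟨y, hy, rfl⟩; exact hy
  rw [h]
  exact (isCompact_Icc).image (ContinuousLinearEquiv.continuous _)

lemma measurableSet_cube (d : ℕ) : MeasurableSet (cube d) := by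
  rw [cube_eq]
  exact (MeasurableEquiv.toLp 2 (Fin d → ℝ)).symm.measurable measurableSet_Icc

lemma norm_gradient_sq {d : ℕ} (f : EuclideanSpace ℝ (Fin d) → ℝ)
    (x : EuclideanSpace ℝ (Fin d)) :
    ‖gradient f x‖ ^ 2 = ∑ i, (fderiv ℝ f x (EuclideanSpace.single i 1))^2 := by
  have hcoord : ∀ i, gradient f x i = fderiv ℝ f x (EuclideanSpace.single i 1) := by
    intro i
    have h1 : (inner ℝ (gradient f x) (EuclideanSpace.single i (1:ℝ)) : ℝ)
        = fderiv ℝ f x (EuclideanSpace.single i 1) := by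
      rw [gradient]
      exact InnerProductSpace.toDual_symm_apply
    rw [← h1, EuclideanSpace.inner_single_right]
    simp
  rw [EuclideanSpace.norm_eq]
  rw [Real.sq_sqrt (by positivity)]
  exact Finset.sum_congr rfl fun i _ => by rw [← hcoord i]; simp [sq_abs]

lemma fderiv_shift {X Y : Type*} [NormedAddCommGroup X] [NormedSpace ℝ X]
    [NormedAddCommGroup Y] [NormedSpace ℝ Y]
    (f : X → Y) (hf : Differentiable ℝ f) (c x : X) :
    fderiv ℝ (fun y => f (y + c)) x = fderiv ℝ f (x + c) := by
  have h1 : HasFDerivAt (fun y : X => y + c) (ContinuousLinearMap.id ℝ X) x :=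
    (hasFDerivAt_id x).add_const c
  have h : HasFDerivAt (fun y => f (y + c)) (fderiv ℝ f (x + c)) x := by
    exact ((hf (x + c)).hasFDerivAt.comp x h1)
  exact h.fderiv

lemma fderiv_periodic {X Y : Type*} [NormedAddCommGroup X] [NormedSpace ℝ X]
    [NormedAddCommGroup Y] [NormedSpace ℝ Y]
    (f : X → Y) (hf : Differentiable ℝ f) (c : X) (hper : ∀ x, f (x + c) = f x) (x : X) :
    fderiv ℝ f (x + c) = fderiv ℝ f x := by
  rw [← fderiv_shift f hf c x]
  congr 1
  funext y
  exact hper y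

end helpers

section partials
variable {F : Type*} [NormedAddCommGroup F] [NormedSpace ℝ F]

noncomputable def D1 (Φ : F × ℝ → ℝ) : F × ℝ → (F × ℝ →L[ℝ] ℝ) := fderiv ℝ Φ
noncomputable def D2 (Φ : F × ℝ → ℝ) : F × ℝ → (F × ℝ →L[ℝ] (F × ℝ →L[ℝ] ℝ)) :=
  fderiv ℝ (D1 Φ)

variable {Φ : F × ℝ → ℝ}

lemma D1_contDiff (hΦ : ContDiff ℝ (⊤ : ℕ∞) Φ) : ContDiff ℝ ((⊤:ℕ∞) : WithTop ℕ∞) (D1 Φ) :=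
  (contDiff_infty_iff_fderiv.1 (hΦ.of_le (by simp))).2
lemma D2_contDiff (hΦ : ContDiff ℝ (⊤ : ℕ∞) Φ) : ContDiff ℝ ((⊤:ℕ∞) : WithTop ℕ∞) (D2 Φ) :=
  (contDiff_infty_iff_fderiv.1 ((D1_contDiff hΦ).of_le (le_refl _))).2

lemma hasFDerivAt_inl (x : F) (t : ℝ) :
    HasFDerivAt (fun y : F => (y, t)) (ContinuousLinearMap.inl ℝ F ℝ) x :=
  (hasFDerivAt_id x).prodMk (hasFDerivAt_const t x)

lemma hasDerivAt_inr (x : F) (t : ℝ) :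
    HasDerivAt (fun s : ℝ => (x, s)) ((0 : F), (1 : ℝ)) t := by
  have := (hasDerivAt_const t x).prodMk (hasDerivAt_id t)
  simpa using this

lemma hasFDerivAt_partial_x (hΦ : ContDiff ℝ (⊤ : ℕ∞) Φ) (x : F) (t : ℝ) :
    HasFDerivAt (fun y => Φ (y, t)) ((D1 Φ (x, t)).comp (ContinuousLinearMap.inl ℝ F ℝ)) x :=
  ((hΦ.differentiable (by simp) (x, t)).hasFDerivAt).comp x (hasFDerivAt_inl x t)

lemma pderiv_x (hΦ : ContDiff ℝ (⊤ : ℕ∞) Φ) (x : F) (t : ℝ) (v : F) :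
    fderiv ℝ (fun y => Φ (y, t)) x v = D1 Φ (x, t) (v, 0) := by
  rw [(hasFDerivAt_partial_x hΦ x t).fderiv]; rfl

lemma hasDerivAt_partial_t (hΦ : ContDiff ℝ (⊤ : ℕ∞) Φ) (x : F) (t : ℝ) :
    HasDerivAt (fun s => Φ (x, s)) (D1 Φ (x, t) (0, 1)) t :=
  ((hΦ.differentiable (by simp) (x, t)).hasFDerivAt).comp_hasDerivAt t (hasDerivAt_inr x t)

lemma pderiv_t (hΦ : ContDiff ℝ (⊤ : ℕ∞) Φ) (x : F) (t : ℝ) :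
    deriv (fun s => Φ (x, s)) t = D1 Φ (x, t) (0, 1) :=
  (hasDerivAt_partial_t hΦ x t).deriv

lemma hasDerivAt_D1_t (hΦ : ContDiff ℝ (⊤ : ℕ∞) Φ) (x : F) (t : ℝ) (w : F × ℝ) :
    HasDerivAt (fun s => D1 Φ (x, s) w) (D2 Φ (x, t) (0, 1) w) t := by
  have h1 : HasDerivAt (fun s => D1 Φ (x, s)) (D2 Φ (x, t) (0, 1)) t :=
    (((D1_contDiff hΦ).differentiable (by simp)
      (x, t)).hasFDerivAt).comp_hasDerivAt t (hasDerivAt_inr x t)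
  have h2 := h1.clm_apply (hasDerivAt_const t w)
  simpa using h2

lemma pderiv_x_D1 (hΦ : ContDiff ℝ (⊤ : ℕ∞) Φ) (x : F) (t : ℝ) (v : F) (w : F × ℝ) :
    fderiv ℝ (fun y => D1 Φ (y, t) w) x v = D2 Φ (x, t) (v, 0) w := by
  have h1 : HasFDerivAt (fun y => D1 Φ (y, t))
      ((D2 Φ (x, t)).comp (ContinuousLinearMap.inl ℝ F ℝ)) x :=
    (((D1_contDiff hΦ).differentiable (by simp) (x, t)).hasFDerivAt).comp x
      (hasFDerivAt_inl x t)
  have h2 := h1.clm_apply (hasFDerivAt_const w x)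
  rw [h2.fderiv]
  simp

lemma D2_symm (hΦ : ContDiff ℝ (⊤ : ℕ∞) Φ) (x : F) (t : ℝ) (a b : F × ℝ) :
    D2 Φ (x, t) a b = D2 Φ (x, t) b a :=
  second_derivative_symmetric (f := Φ) (f' := D1 Φ) (f'' := D2 Φ (x, t))
    (fun y => (hΦ.differentiable (by simp) y).hasFDerivAt)
    (((D1_contDiff hΦ).differentiable (by simp) (x, t)).hasFDerivAt) a b

end partials

/-- Integral over the cube of a partial derivative of a periodic smooth function is zero. -/
lemma integral_pderiv_eq_zero {d : ℕ} (hd : d ≠ 0)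
    (u : EuclideanSpace ℝ (Fin d) → ℝ) (hu : ContDiff ℝ ((⊤:ℕ∞) : WithTop ℕ∞) u)
    (hper : ∀ x j, u (x + EuclideanSpace.single j 1) = u x) (i : Fin d) :
    ∫ x in cube d, fderiv ℝ u x (EuclideanSpace.single i 1) = 0 := by
  obtain ⟨n, rfl⟩ := Nat.exists_eq_succ_of_ne_zero hd
  set L := EuclideanSpace.equiv (Fin (n+1)) ℝ with hL
  set v : (Fin (n+1) → ℝ) → ℝ := fun y => u (L.symm y) with hv
  have hvdiff : ContDiff ℝ ((⊤:ℕ∞) : WithTop ℕ∞) v :=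
    hu.comp (L.symm : _ ≃L[ℝ] _).contDiff
  have hLsymm_single : ∀ (j : Fin (n+1)),
      L.symm (Pi.single j (1:ℝ)) = EuclideanSpace.single j 1 := by
    intro j; rfl
  have hvper : ∀ y (j : Fin (n+1)), v (y + Pi.single j 1) = v y := by
    intro y j
    have : L.symm (y + Pi.single j 1) = L.symm y + EuclideanSpace.single j 1 := by
      rw [map_add, hLsymm_single]
    rw [hv]; simp only [this]; exact hper _ j
  set S : ℝ →L[ℝ] (Fin (n+1) → ℝ) :=
    ContinuousLinearMap.pi (fun j => if j = i then ContinuousLinearMap.id ℝ ℝ else 0) with hS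
  have hSapp : ∀ c, S c = Pi.single i c := by
    intro c; funext j
    by_cases h : j = i <;> simp [hS, Pi.single_apply, h, ContinuousLinearMap.pi_apply]
  set f : (Fin (n+1) → ℝ) → (Fin (n+1) → ℝ) := fun y => S (v y) with hf
  set f' : (Fin (n+1) → ℝ) → (Fin (n+1) → ℝ) →L[ℝ] (Fin (n+1) → ℝ) :=
    fun y => S.comp (fderiv ℝ v y) with hf'
  have hvd : Differentiable ℝ v := hvdiff.differentiable (by simp)
  have hdf : ∀ y, HasFDerivAt f (f' y) y := fun y => S.hasFDerivAt.comp y (hvd y).hasFDerivAt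
  have hfc : Continuous f := S.continuous.comp hvdiff.continuous
  have hdivflip : (fun y => ∑ j, f' y (Pi.single j 1) j)
      = fun y => fderiv ℝ v y (Pi.single i 1) := by
    funext y
    have h1 : ∀ j : Fin (n+1), f' y (Pi.single j 1) j
        = Pi.single (M := fun _ => ℝ) i (fderiv ℝ v y (Pi.single j 1)) j := by
      intro j; rw [hf']; simp only [ContinuousLinearMap.comp_apply]; rw [hSapp]
    simp only [h1, Pi.single_apply]
    rw [Finset.sum_ite_eq' Finset.univ i (fun j => fderiv ℝ v y (Pi.single j 1))]
    simp
  have hdivcont : Continuous fun y => fderiv ℝ v y (Pi.single i 1) :=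
    (ContinuousLinearMap.apply ℝ ℝ (Pi.single i 1)).continuous.comp
      (hvdiff.continuous_fderiv (by simp))
  have key := integral_divergence_of_hasFDerivAt_off_countable
      (0 : Fin (n+1) → ℝ) 1 (by intro j; norm_num) f f' ∅ Set.countable_empty
      hfc.continuousOn (fun x _ => hdf x)
      (by
        show IntegrableOn (fun y => ∑ j, f' y (Pi.single j 1) j) _ _
        rw [hdivflip]
        exact hdivcont.continuousOn.integrableOn_compact isCompact_Icc)
  rw [hdivflip] at key
  have hfaces : ∀ j : Fin (n+1),
      ((∫ x in Set.Icc ((0:Fin (n+1)→ℝ) ∘ j.succAbove) ((1:Fin (n+1)→ℝ) ∘ j.succAbove),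
        f (j.insertNth ((1:Fin (n+1)→ℝ) j) x) j)
      - ∫ x in Set.Icc ((0:Fin (n+1)→ℝ) ∘ j.succAbove) ((1:Fin (n+1)→ℝ) ∘ j.succAbove),
        f (j.insertNth ((0:Fin (n+1)→ℝ) j) x) j) = 0 := by
    intro j
    have harg : ∀ x : Fin n → ℝ, (j.insertNth ((1:Fin (n+1)→ℝ) j) x : Fin (n+1) → ℝ)
        = (j.insertNth ((0:Fin (n+1)→ℝ) j) x : Fin (n+1) → ℝ)
          + (Pi.single j 1 : Fin (n+1) → ℝ) := by
      intro x; funext k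
      simp only [Pi.add_apply]
      refine Fin.succAboveCases j ?_ ?_ k
      · simp [Fin.insertNth_apply_same, Pi.single_apply]
      · intro m
        simp [Fin.insertNth_apply_succAbove, Pi.single_apply, (Fin.succAbove_ne j m).symm]
    have hfp : ∀ x : Fin n → ℝ, f (j.insertNth ((1:Fin (n+1)→ℝ) j) x) j
        = f (j.insertNth ((0:Fin (n+1)→ℝ) j) x) j := by
      intro x
      rw [harg, hf]
      simp only [hvper]
    simp only [hfp, sub_self]
  rw [Finset.sum_congr rfl (fun j _ => hfaces j), Finset.sum_const, smul_zero] at key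
  have e := EuclideanSpace.volume_preserving_symm_measurableEquiv_toLp (Fin (n+1))
  have emb : MeasurableEmbedding (MeasurableEquiv.toLp 2 (Fin (n+1) → ℝ)).symm :=
    (MeasurableEquiv.toLp 2 (Fin (n+1) → ℝ)).symm.measurableEmbedding
  have transfer := e.setIntegral_preimage_emb emb
    (fun y => fderiv ℝ v y (Pi.single i 1)) (Set.Icc 0 1)
  rw [← cube_eq] at transfer
  rw [← transfer] at key
  rw [← key]
  apply setIntegral_congr_fun (by rw [cube_eq]; exact emb.measurable measurableSet_Icc)
  intro x _
  have hxid : L.symm ((MeasurableEquiv.toLp 2 (Fin (n+1) → ℝ)).symm x) = x := rfl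
  have hfd : fderiv ℝ v ((MeasurableEquiv.toLp 2 (Fin (n+1) → ℝ)).symm x)
      = (fderiv ℝ u x).comp (L.symm : (Fin (n+1) → ℝ) →L[ℝ] EuclideanSpace ℝ (Fin (n+1))) := by
    have h1 : fderiv ℝ (u ∘ (L.symm : (Fin (n+1) → ℝ) ≃L[ℝ] EuclideanSpace ℝ (Fin (n+1))))
        ((MeasurableEquiv.toLp 2 (Fin (n+1) → ℝ)).symm x)
        = (fderiv ℝ u (L.symm ((MeasurableEquiv.toLp 2 (Fin (n+1) → ℝ)).symm x))).comp
          ((L.symm : (Fin (n+1) → ℝ) ≃L[ℝ] EuclideanSpace ℝ (Fin (n+1))) :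
            (Fin (n+1) → ℝ) →L[ℝ] EuclideanSpace ℝ (Fin (n+1))) :=
      ContinuousLinearEquiv.comp_right_fderiv _
    rw [hxid] at h1
    exact h1
  show fderiv ℝ u x (EuclideanSpace.single i 1)
      = fderiv ℝ v ((MeasurableEquiv.toLp 2 (Fin (n+1) → ℝ)).symm x) (Pi.single i 1)
  rw [hfd]
  simp only [ContinuousLinearMap.comp_apply, ContinuousLinearEquiv.coe_coe]
  rw [hLsymm_single]


section ACdefs
variable {d : ℕ}

noncomputable def Pp (Φ : EuclideanSpace ℝ (Fin d) × ℝ → ℝ) (i : Fin d)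
    (x : EuclideanSpace ℝ (Fin d)) (s : ℝ) : ℝ :=
  D1 Φ (x, s) (EuclideanSpace.single i 1, 0)

noncomputable def Ptt (Φ : EuclideanSpace ℝ (Fin d) × ℝ → ℝ)
    (x : EuclideanSpace ℝ (Fin d)) (s : ℝ) : ℝ :=
  D1 Φ (x, s) (0, 1)

noncomputable def Qq (Φ : EuclideanSpace ℝ (Fin d) × ℝ → ℝ) (i : Fin d)
    (x : EuclideanSpace ℝ (Fin d)) (s : ℝ) : ℝ :=
  D2 Φ (x, s) (0, 1) (EuclideanSpace.single i 1, 0)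

noncomputable def Ll (Φ : EuclideanSpace ℝ (Fin d) × ℝ → ℝ) (i : Fin d)
    (x : EuclideanSpace ℝ (Fin d)) (s : ℝ) : ℝ :=
  D2 Φ (x, s) (EuclideanSpace.single i 1, 0) (EuclideanSpace.single i 1, 0)

end ACdefs

noncomputable def Wp : ℝ → ℝ := fun r => (1 - r ^ 2) * (-(2 * r))

noncomputable def Aa {d : ℕ} (Φ : EuclideanSpace ℝ (Fin d) × ℝ → ℝ) (ε : ℝ)
    (x : EuclideanSpace ℝ (Fin d)) (t : ℝ) : ℝ :=
  -(∑ i, Ll Φ i x t) + Wp (Φ (x, t)) / ε ^ 2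

set_option maxHeartbeats 2000000 in
theorem stmt_4 (d : ℕ) (hd : 2 ≤ d) (ε R₀ T : ℝ) (hε : 0 < ε) (hR₀ : 0 < R₀)
    (hT : 0 < T) (W : ℝ → ℝ) (hW : ∀ s, W s = (1 - s ^ 2) ^ 2 / 2)
    (g : EuclideanSpace ℝ (Fin d) → ℝ) (hg_smooth : ContDiff ℝ (⊤ : ℕ∞) g)
    (hg_per : ∀ x i, g (x + EuclideanSpace.single i 1) = g x)
    (hg_bd : ∀ x, |g x| ≤ (d : ℝ) / R₀)
    (φ : EuclideanSpace ℝ (Fin d) → ℝ → ℝ)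
    (hφ_smooth : ContDiff ℝ (⊤ : ℕ∞) (fun p : EuclideanSpace ℝ (Fin d) × ℝ => φ p.1 p.2))
    (hφ_per : ∀ x t i, φ (x + EuclideanSpace.single i 1) t = φ x t)
    (hPDE : ∀ x, ∀ t ∈ Set.Ioo 0 T,
      ε * deriv (fun s => φ x s) t =
        ε * lap (fun y => φ y t) x - deriv W (φ x t) / ε
          + g x * Real.sqrt (2 * W (φ x t))) :
    ∀ t ∈ Set.Ioo 0 T,
      deriv (fun s => ∫ x in cube d,
          (ε * ‖gradient (fun y => φ y s) x‖ ^ 2 / 2 + W (φ x s) / ε)) t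
        + (1 / 2) * ∫ x in cube d,
            ε * (-(lap (fun y => φ y t) x) + deriv W (φ x t) / ε ^ 2) ^ 2
      ≤ ((d : ℝ) ^ 2 / R₀ ^ 2) * ∫ x in cube d, W (φ x t) / ε := by
  intro t ht
  have hεne : ε ≠ 0 := ne_of_gt hε
  -- notation
  have hΦdef : (fun p : EuclideanSpace ℝ (Fin d) × ℝ => φ p.1 p.2)
      = (fun p : EuclideanSpace ℝ (Fin d) × ℝ => φ p.1 p.2) := rfl
  -- W facts
  have hWfun : W = fun s => (1 - s ^ 2) ^ 2 / 2 := funext hW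
  have hWd : ∀ r, HasDerivAt W (Wp r) r := by
    intro r
    rw [hWfun]
    have h1 : HasDerivAt (fun s : ℝ => 1 - s ^ 2) (-(2 * r)) r := by
      simpa using ((hasDerivAt_pow 2 r).const_sub 1)
    have h2 := (h1.pow 2).div_const 2
    refine h2.congr_deriv ?_
    simp [Wp]
    ring
  have hderivW : ∀ r, deriv W r = Wp r := fun r => (hWd r).deriv
  have hWnn : ∀ r, 0 ≤ W r := fun r => by rw [hW r]; positivity
  have hWcont : Continuous W := by rw [hWfun]; continuity
  have hW'cont : Continuous Wp := by unfold Wp; continuity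
  -- continuity toolkit
  set Φ : EuclideanSpace ℝ (Fin d) × ℝ → ℝ := fun p => φ p.1 p.2 with hΦ
  have hΦsm : ContDiff ℝ (⊤ : ℕ∞) Φ := hφ_smooth
  have hΦcont : Continuous Φ := hΦsm.continuous
  have hD1c : Continuous (D1 Φ) := (D1_contDiff hΦsm).continuous
  have hD2c : Continuous (D2 Φ) := (D2_contDiff hΦsm).continuous
  have hD1ev : ∀ w : EuclideanSpace ℝ (Fin d) × ℝ,
      Continuous fun p : EuclideanSpace ℝ (Fin d) × ℝ => D1 Φ p w := fun w =>
    (ContinuousLinearMap.apply ℝ ℝ w).continuous.comp hD1c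
  have hD2ev : ∀ a b : EuclideanSpace ℝ (Fin d) × ℝ,
      Continuous fun p : EuclideanSpace ℝ (Fin d) × ℝ => D2 Φ p a b := fun a b =>
    (hD2c.clm_apply continuous_const).clm_apply continuous_const
  have hxt : ∀ s : ℝ, Continuous fun x : EuclideanSpace ℝ (Fin d) => (x, s) := fun s =>
    continuous_id.prodMk continuous_const
  have hIntOn : ∀ (f : EuclideanSpace ℝ (Fin d) → ℝ),
      Continuous f → IntegrableOn f (cube d) := fun f hf =>
    hf.continuousOn.integrableOn_compact (isCompact_cube d)
  -- pointwise gradient identity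
  have hgradEq : ∀ (s : ℝ) (x : EuclideanSpace ℝ (Fin d)),
      ‖gradient (fun y => φ y s) x‖ ^ 2 = ∑ i, (Pp Φ i x s) ^ 2 := by
    intro s x
    rw [norm_gradient_sq]
    refine Finset.sum_congr rfl fun i _ => ?_
    rw [show (fun y => φ y s) = (fun y => Φ (y, s)) from rfl,
      pderiv_x hΦsm x s (EuclideanSpace.single i 1)]
    rfl
  -- rewrite the energy functional
  have hEfun : (fun s => ∫ x in cube d,
        (ε * ‖gradient (fun y => φ y s) x‖ ^ 2 / 2 + W (φ x s) / ε))
      = fun s => ∫ x in cube d, (ε * (∑ i, (Pp Φ i x s) ^ 2) / 2 + W (φ x s) / ε) := by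
    funext s
    congr 1
    funext x
    rw [hgradEq s x]
  -- pointwise time derivatives
  have hFderiv : ∀ (x : EuclideanSpace ℝ (Fin d)) (s : ℝ),
      HasDerivAt (fun s' => ε * (∑ i, (Pp Φ i x s') ^ 2) / 2 + W (φ x s') / ε)
        (ε * (∑ i, Pp Φ i x s * Qq Φ i x s) + Wp (φ x s) * Ptt Φ x s / ε) s := by
    intro x s
    have hsum : HasDerivAt (fun s' => ∑ i, (Pp Φ i x s') ^ 2)
        (∑ i, 2 * Pp Φ i x s * Qq Φ i x s) s := by
      apply HasDerivAt.fun_sum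
      intro i _
      have h1 : HasDerivAt (fun s' => Pp Φ i x s') (Qq Φ i x s) s :=
        hasDerivAt_D1_t hΦsm x s (EuclideanSpace.single i 1, 0)
      have h2 := h1.pow 2
      refine h2.congr_deriv ?_
      ring
    have hWpart : HasDerivAt (fun s' => W (φ x s')) (Wp (φ x s) * Ptt Φ x s) s := by
      have h1 : HasDerivAt (fun s' => Φ (x, s')) (Ptt Φ x s) s := hasDerivAt_partial_t hΦsm x s
      exact (hWd (φ x s)).comp s h1
    have h3 := ((hsum.const_mul ε).div_const 2).add (hWpart.div_const ε)
    refine h3.congr_deriv ?_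
    rw [show (∑ i, 2 * Pp Φ i x s * Qq Φ i x s) = 2 * ∑ i, Pp Φ i x s * Qq Φ i x s by
      rw [Finset.mul_sum]; exact Finset.sum_congr rfl fun i _ => by ring]
    ring
  -- joint continuity of the time-derivative integrand
  have hGjoint : Continuous (fun p : EuclideanSpace ℝ (Fin d) × ℝ =>
      ε * (∑ i, Pp Φ i p.1 p.2 * Qq Φ i p.1 p.2) + Wp (φ p.1 p.2) * Ptt Φ p.1 p.2 / ε) := by
    apply Continuous.add
    · apply Continuous.mul continuous_const
      apply continuous_finset_sum
      intro i _
      exact (hD1ev (EuclideanSpace.single i 1, 0)).mul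
        ((hD2c.clm_apply continuous_const).clm_apply continuous_const)
    · exact ((hW'cont.comp hΦcont).mul (hD1ev (0,1))).div_const ε
  -- continuity in x, for fixed s
  have hFcont : ∀ s : ℝ, Continuous (fun x : EuclideanSpace ℝ (Fin d) =>
      ε * (∑ i, (Pp Φ i x s) ^ 2) / 2 + W (φ x s) / ε) := by
    intro s
    apply Continuous.add
    · apply Continuous.div_const
      apply Continuous.mul continuous_const
      apply continuous_finset_sum
      intro i _
      exact ((hD1ev (EuclideanSpace.single i 1, 0)).comp (hxt s)).pow 2
    · exact ((hWcont.comp (hΦcont.comp (hxt s))).div_const ε)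
  have hGcont : ∀ s : ℝ, Continuous (fun x : EuclideanSpace ℝ (Fin d) =>
      ε * (∑ i, Pp Φ i x s * Qq Φ i x s) + Wp (φ x s) * Ptt Φ x s / ε) :=
    fun s => hGjoint.comp (hxt s)
  -- uniform bound near t
  obtain ⟨C, hC⟩ := ((isCompact_cube d).prod (isCompact_Icc (a := t - 1) (b := t + 1))).exists_bound_of_continuousOn hGjoint.continuousOn
  -- differentiation under the integral sign
  have hE' : HasDerivAt (fun s => ∫ x in cube d,
        (ε * (∑ i, (Pp Φ i x s) ^ 2) / 2 + W (φ x s) / ε))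
      (∫ x in cube d, (ε * (∑ i, Pp Φ i x t * Qq Φ i x t) + Wp (φ x t) * Ptt Φ x t / ε)) t := by
    have hmain := hasDerivAt_integral_of_dominated_loc_of_deriv_le
      (F := fun s x => ε * (∑ i, (Pp Φ i x s) ^ 2) / 2 + W (φ x s) / ε)
      (F' := fun s x => ε * (∑ i, Pp Φ i x s * Qq Φ i x s) + Wp (φ x s) * Ptt Φ x s / ε)
      (μ := volume.restrict (cube d)) (x₀ := t) (bound := fun _ => C)
      (s := Metric.ball t 1) (Metric.ball_mem_nhds t one_pos)
      (Filter.Eventually.of_forall fun s => ((hFcont s).aestronglyMeasurable))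
      (hIntOn _ (hFcont t))
      ((hGcont t).aestronglyMeasurable)
      ?_ ?_ ?_
    · exact hmain.2
    · -- bound
      rw [ae_restrict_iff' (measurableSet_cube d)]
      refine Filter.Eventually.of_forall fun x hx => fun s hs => ?_
      refine hC (x, s) ⟨hx, ?_⟩
      rw [Metric.mem_ball, Real.dist_eq] at hs
      constructor <;> [linarith [abs_le.1 hs.le |>.1]; linarith [abs_le.1 hs.le |>.2]]
    · exact integrableOn_const ((isCompact_cube d).measure_lt_top).ne
    · exact Filter.Eventually.of_forall fun x => fun s _ => hFderiv x s
  -- periodicity of derivatives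
  have hΦper : ∀ (j : Fin d) (p : EuclideanSpace ℝ (Fin d) × ℝ),
      Φ (p + (EuclideanSpace.single j 1, 0)) = Φ p := by
    intro j p
    show φ (p.1 + EuclideanSpace.single j 1) (p.2 + 0) = φ p.1 p.2
    rw [add_zero]
    exact hφ_per _ _ j
  have hD1per : ∀ (j : Fin d) (p : EuclideanSpace ℝ (Fin d) × ℝ),
      D1 Φ (p + (EuclideanSpace.single j 1, 0)) = D1 Φ p := fun j p =>
    fderiv_periodic Φ (hΦsm.differentiable (by simp)) _ (hΦper j) p
  have hD2per : ∀ (j : Fin d) (p : EuclideanSpace ℝ (Fin d) × ℝ),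
      D2 Φ (p + (EuclideanSpace.single j 1, 0)) = D2 Φ p := fun j p =>
    fderiv_periodic (D1 Φ) ((D1_contDiff hΦsm).differentiable (by simp)) _
      (hD1per j) p
  have hshift : ∀ (x : EuclideanSpace ℝ (Fin d)) (j : Fin d) (s : ℝ),
      ((x + EuclideanSpace.single j 1 : EuclideanSpace ℝ (Fin d)), s)
        = ((x, s) + (EuclideanSpace.single j 1, 0) : EuclideanSpace ℝ (Fin d) × ℝ) := by
    intro x j s
    rw [Prod.mk_add_mk, add_zero]
  -- integration by parts
  have hIBPi : ∀ i : Fin d,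
      ∫ x in cube d, (Ll Φ i x t * Ptt Φ x t + Pp Φ i x t * Qq Φ i x t) = 0 := by
    intro i
    have hPic : ContDiff ℝ ((⊤:ℕ∞) : WithTop ℕ∞) (fun y => Pp Φ i y t) := by
      unfold Pp
      exact (((D1_contDiff hΦsm).comp
        ((contDiff_id.prodMk contDiff_const))).clm_apply contDiff_const)
    have hPttc' : ContDiff ℝ ((⊤:ℕ∞) : WithTop ℕ∞) (fun y => Ptt Φ y t) := by
      unfold Ptt
      exact (((D1_contDiff hΦsm).comp
        ((contDiff_id.prodMk contDiff_const))).clm_apply contDiff_const)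
    have hu : ContDiff ℝ ((⊤:ℕ∞) : WithTop ℕ∞) (fun y => Pp Φ i y t * Ptt Φ y t) :=
      hPic.mul hPttc'
    have huper : ∀ (x : EuclideanSpace ℝ (Fin d)) (j : Fin d),
        (fun y => Pp Φ i y t * Ptt Φ y t) (x + EuclideanSpace.single j 1)
          = (fun y => Pp Φ i y t * Ptt Φ y t) x := by
      intro x j
      show Pp Φ i (x + EuclideanSpace.single j 1) t * Ptt Φ (x + EuclideanSpace.single j 1) t
        = Pp Φ i x t * Ptt Φ x t
      unfold Pp Ptt
      rw [hshift, hD1per]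
    have hfd : ∀ x : EuclideanSpace ℝ (Fin d),
        fderiv ℝ (fun y => Pp Φ i y t * Ptt Φ y t) x (EuclideanSpace.single i 1)
          = Ll Φ i x t * Ptt Φ x t + Pp Φ i x t * Qq Φ i x t := by
      intro x
      have hA : DifferentiableAt ℝ (fun y => Pp Φ i y t) x :=
        (hPic.differentiable (by simp)) x
      have hB : DifferentiableAt ℝ (fun y => Ptt Φ y t) x :=
        (hPttc'.differentiable (by simp)) x
      rw [fderiv_fun_mul hA hB]
      simp only [ContinuousLinearMap.add_apply, ContinuousLinearMap.coe_smul',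
        Pi.smul_apply, smul_eq_mul]
      have h1 : fderiv ℝ (fun y => Pp Φ i y t) x (EuclideanSpace.single i 1) = Ll Φ i x t := by
        unfold Pp Ll
        exact pderiv_x_D1 hΦsm x t (EuclideanSpace.single i 1) (EuclideanSpace.single i 1, 0)
      have h2 : fderiv ℝ (fun y => Ptt Φ y t) x (EuclideanSpace.single i 1) = Qq Φ i x t := by
        unfold Ptt Qq
        rw [pderiv_x_D1 hΦsm x t (EuclideanSpace.single i 1) (0, 1)]
        exact D2_symm hΦsm x t _ _
      rw [h1, h2]
      ring
    have h0 := integral_pderiv_eq_zero (by omega)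
      (fun y => Pp Φ i y t * Ptt Φ y t) hu huper i
    rw [show (fun x => Ll Φ i x t * Ptt Φ x t + Pp Φ i x t * Qq Φ i x t)
      = fun x => fderiv ℝ (fun y => Pp Φ i y t * Ptt Φ y t) x (EuclideanSpace.single i 1)
      from funext fun x => (hfd x).symm]
    exact h0
  -- continuity at time t
  have hLlc : ∀ i, Continuous fun x => Ll Φ i x t := fun i => (hD2ev _ _).comp (hxt t)
  have hPttcont : Continuous fun x => Ptt Φ x t := (hD1ev (0,1)).comp (hxt t)
  have hPpcont : ∀ i, Continuous fun x => Pp Φ i x t := fun i => (hD1ev _).comp (hxt t)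
  have hQqcont : ∀ i, Continuous fun x => Qq Φ i x t := fun i => (hD2ev _ _).comp (hxt t)
  have hWφc : Continuous fun x => W (φ x t) := hWcont.comp (hΦcont.comp (hxt t))
  have hW'φc : Continuous fun x => Wp (φ x t) := hW'cont.comp (hΦcont.comp (hxt t))
  have hAac : Continuous fun x => Aa Φ ε x t := by
    unfold Aa
    exact ((continuous_finset_sum _ fun i _ => hLlc i).neg).add
      ((hW'cont.comp (hΦcont.comp (hxt t))).div_const _)
  -- Laplacian identity
  have hlapEq : ∀ x, lap (fun y => φ y t) x = ∑ i, Ll Φ i x t := by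
    intro x
    unfold lap
    refine Finset.sum_congr rfl fun i _ => ?_
    have hrw : (fun y => fderiv ℝ (fun z => φ z t) y (EuclideanSpace.single i 1))
        = fun y => D1 Φ (y, t) (EuclideanSpace.single i 1, 0) :=
      funext fun y => pderiv_x hΦsm y t _
    rw [hrw]
    exact pderiv_x_D1 hΦsm x t _ _
  have hAaEq : ∀ x, (-(lap (fun y => φ y t) x) + deriv W (φ x t) / ε ^ 2) = Aa Φ ε x t := by
    intro x
    rw [hlapEq, hderivW]
    rfl
  -- sum of IBP identities
  have hsum0 : ∫ x in cube d,
      (∑ i, (Ll Φ i x t * Ptt Φ x t + Pp Φ i x t * Qq Φ i x t)) = 0 := by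
    rw [integral_finset_sum _ (fun i _ => hIntOn _
      (((hLlc i).fun_mul hPttcont).fun_add ((hPpcont i).fun_mul (hQqcont i))))]
    simp only [hIBPi]
    simp
  -- replace the integrand using IBP
  have hkey : ∫ x in cube d,
        (ε * (∑ i, Pp Φ i x t * Qq Φ i x t) + Wp (φ x t) * Ptt Φ x t / ε)
      = ∫ x in cube d, ε * Aa Φ ε x t * Ptt Φ x t := by
    have hptw : ∀ x, (ε * (∑ i, Pp Φ i x t * Qq Φ i x t) + Wp (φ x t) * Ptt Φ x t / ε)
        = ε * Aa Φ ε x t * Ptt Φ x t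
          + ε * (∑ i, (Ll Φ i x t * Ptt Φ x t + Pp Φ i x t * Qq Φ i x t)) := by
      intro x
      unfold Aa
      rw [Finset.sum_add_distrib, ← Finset.sum_mul]
      rw [show Φ (x, t) = φ x t from rfl]
      field_simp
      ring
    rw [setIntegral_congr_fun (measurableSet_cube d) (fun x _ => hptw x)]
    rw [integral_add (hIntOn _ ((continuous_const.fun_mul hAac).fun_mul hPttcont))
      (hIntOn _ (continuous_const.fun_mul (continuous_finset_sum _ fun i _ =>
        ((hLlc i).fun_mul hPttcont).fun_add ((hPpcont i).fun_mul (hQqcont i)))))]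
    rw [integral_const_mul, hsum0]
    simp
  -- PDE in the new notation
  have hPDE' : ∀ x, Ptt Φ x t
      = -(Aa Φ ε x t) + g x * Real.sqrt (2 * W (φ x t)) / ε := by
    intro x
    have h := hPDE x t ht
    have hdd : deriv (fun s => φ x s) t = Ptt Φ x t := pderiv_t hΦsm x t
    rw [hdd, hlapEq x, hderivW] at h
    have hgoal : ε * Ptt Φ x t
        = ε * (-(Aa Φ ε x t) + g x * Real.sqrt (2 * W (φ x t)) / ε) := by
      rw [h]
      unfold Aa
      rw [show Φ (x, t) = φ x t from rfl]
      field_simp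
      ring
    exact mul_left_cancel₀ hεne hgoal
  -- pointwise inequality
  have hptbd : ∀ x, ε * Aa Φ ε x t * Ptt Φ x t
      ≤ -(ε/2) * (Aa Φ ε x t)^2 + ((d:ℝ)^2/R₀^2) * (W (φ x t)/ε) := by
    intro x
    set A := Aa Φ ε x t with hA
    set r := Real.sqrt (2 * W (φ x t)) with hr
    set B := ((d:ℝ)^2/R₀^2) with hB
    have hr2 : r ^ 2 = 2 * W (φ x t) := Real.sq_sqrt (by nlinarith [hWnn (φ x t)])
    have hg2 : (g x)^2 ≤ B := by
      have h1 := abs_le.1 (hg_bd x)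
      have h2 : (g x)^2 ≤ ((d:ℝ)/R₀)^2 := sq_le_sq' (by linarith [h1.1]) h1.2
      rw [hB, ← div_pow]
      exact h2
    rw [hPDE' x, ← hA, ← hr]
    have hexp : ε * A * (-A + g x * r / ε) = -(ε*A^2) + A * (g x * r) := by
      field_simp
    rw [hexp]
    have h5 : (g x)^2 * r^2 ≤ B * (2 * W (φ x t)) := by
      rw [hr2]
      exact mul_le_mul_of_nonneg_right hg2 (by nlinarith [hWnn (φ x t)])
    suffices hsuf : 0 ≤ (ε/2)*A^2 - A*(g x*r) + (B * W (φ x t))/ε by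
      have : B * (W (φ x t)/ε) = (B * W (φ x t))/ε := by ring
      rw [this]
      linarith
    have hpos : (0:ℝ) < 2*ε := by linarith
    have h10 : (2*ε) * ((ε/2)*A^2 - A*(g x*r) + (B * W (φ x t))/ε)
        = (ε*A - g x*r)^2 + (B*(2*W (φ x t)) - (g x)^2*r^2) := by
      field_simp
      ring
    have h11 : 0 ≤ (2*ε) * ((ε/2)*A^2 - A*(g x*r) + (B * W (φ x t))/ε) := by
      rw [h10]
      exact add_nonneg (sq_nonneg _) (by linarith [h5])
    exact (mul_nonneg_iff_of_pos_left hpos).1 h11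
  -- final assembly
  have hderivE : deriv (fun s => ∫ x in cube d,
      (ε * ‖gradient (fun y => φ y s) x‖ ^ 2 / 2 + W (φ x s) / ε)) t
      = ∫ x in cube d, (ε * (∑ i, Pp Φ i x t * Qq Φ i x t) + Wp (φ x t) * Ptt Φ x t / ε) := by
    rw [hEfun]
    exact hE'.deriv
  rw [hderivE, hkey]
  have hsqEq : (fun x => ε * (-(lap (fun y => φ y t) x) + deriv W (φ x t)/ε^2)^2)
      = fun x => ε * (Aa Φ ε x t)^2 := funext fun x => by rw [hAaEq x]
  rw [hsqEq]
  have hmono : ∫ x in cube d, ε * Aa Φ ε x t * Ptt Φ x t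
      ≤ ∫ x in cube d,
        (-(ε/2) * (Aa Φ ε x t)^2 + ((d:ℝ)^2/R₀^2) * (W (φ x t)/ε)) :=
    setIntegral_mono_on (hIntOn _ ((continuous_const.mul hAac).mul hPttcont))
      (hIntOn _ ((continuous_const.mul (hAac.pow 2)).add
        (continuous_const.mul (hWφc.div_const ε))))
      (measurableSet_cube d) (fun x _ => hptbd x)
  have hsplit : ∫ x in cube d,
      (-(ε/2) * (Aa Φ ε x t)^2 + ((d:ℝ)^2/R₀^2) * (W (φ x t)/ε))
      = (-(1/2)) * (∫ x in cube d, ε * (Aa Φ ε x t)^2)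
        + ((d:ℝ)^2/R₀^2) * (∫ x in cube d, W (φ x t)/ε) := by
    rw [integral_add (hIntOn _ (continuous_const.fun_mul (hAac.fun_pow 2)))
      (hIntOn _ (continuous_const.fun_mul (hWφc.div_const ε)))]
    rw [show (fun x => -(ε/2) * (Aa Φ ε x t)^2) = fun x => (-(1/2)) * (ε * (Aa Φ ε x t)^2)
      from funext fun x => by ring]
    rw [integral_const_mul (-(1/2) : ℝ) fun x => ε * (Aa Φ ε x t)^2,
      integral_const_mul (((d:ℝ)^2/R₀^2)) fun x => W (φ x t)/ε]
  rw [hsplit] at hmono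
  linarith [hmono]
end

section
/- Let r₀(x) = (R₀² - |x|²)/(2R₀) and q^ε(r) = tanh(r/ε). If |x| ≥ R₀ + √ε, then (2q^ε(r₀(x))/ε)(|x|²/R₀² - 1) ≤ -(4/(√ε R₀)) tanh(1/√ε). -/
lemma my_tanh_le_tanh {a b : ℝ} (h : a ≤ b) : Real.tanh a ≤ Real.tanh b := by
  rw [Real.tanh_eq_sinh_div_cosh, Real.tanh_eq_sinh_div_cosh,
    div_le_div_iff₀ (Real.cosh_pos a) (Real.cosh_pos b)]
  have h1 : Real.sinh (a - b) ≤ 0 := by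
    rw [← Real.sinh_zero]
    exact Real.sinh_le_sinh.2 (by linarith)
  have h2 := Real.sinh_sub a b
  linarith

theorem stmt_9 (d : ℕ) (R₀ ε : ℝ) (hR₀ : 0 < R₀) (hε : ε ∈ Set.Ioo (0 : ℝ) 1)
    (r₀ : EuclideanSpace ℝ (Fin d) → ℝ)
    (hr₀ : ∀ x, r₀ x = (R₀ ^ 2 - ‖x‖ ^ 2) / (2 * R₀))
    (q : ℝ → ℝ) (hq : ∀ r, q r = Real.tanh (r / ε))
    (x : EuclideanSpace ℝ (Fin d)) (hx : R₀ + Real.sqrt ε ≤ ‖x‖) :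
    (2 * q (r₀ x) / ε) * (‖x‖ ^ 2 / R₀ ^ 2 - 1)
      ≤ -(4 / (Real.sqrt ε * R₀)) * Real.tanh (1 / Real.sqrt ε) := by
  obtain ⟨hε0, hε1⟩ := hε
  set s := Real.sqrt ε with hs
  have hs0 : 0 < s := Real.sqrt_pos.2 hε0
  have hs2 : s ^ 2 = ε := Real.sq_sqrt hε0.le
  set A := ‖x‖ with hA
  have hA0 : 0 < A := lt_of_lt_of_le (by positivity) hx
  -- Step 1: r₀ x / ε ≤ -(1/s)
  have hdiv : r₀ x / ε ≤ -(1 / s) := by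
    rw [hr₀]
    rw [div_le_iff₀ hε0]
    have hA2 : (R₀ + s) ^ 2 ≤ A ^ 2 := by nlinarith
    rw [div_le_iff₀ (by positivity : (0:ℝ) < 2 * R₀)]
    have : -(1 / s) * ε = -s := by field_simp [hs2]; nlinarith [hs2]
    nlinarith [hs2]
  -- Step 2: q (r₀ x) ≤ - tanh (1/s)
  have hqle : q (r₀ x) ≤ -Real.tanh (1 / s) := by
    rw [hq]
    calc Real.tanh (r₀ x / ε) ≤ Real.tanh (-(1 / s)) := my_tanh_le_tanh hdiv
      _ = -Real.tanh (1 / s) := Real.tanh_neg _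
  have ht0 : 0 ≤ Real.tanh (1 / s) := by
    have := my_tanh_le_tanh (by positivity : (0:ℝ) ≤ 1 / s)
    simpa [Real.tanh_zero] using this
  set t := Real.tanh (1 / s) with htdef
  -- Step 3: B ≥ 2s/R₀
  have hB : 2 * s / R₀ ≤ A ^ 2 / R₀ ^ 2 - 1 := by
    have hA2 : (R₀ + s) ^ 2 ≤ A ^ 2 := by nlinarith
    have h1 : 2 * s / R₀ = 2 * s * R₀ / R₀ ^ 2 := by field_simp
    have h2 : A ^ 2 / R₀ ^ 2 - 1 = (A ^ 2 - R₀ ^ 2) / R₀ ^ 2 := by field_simp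
    rw [h1, h2]
    gcongr
    nlinarith [hs2]
  -- Final combination
  have key : 2 * q (r₀ x) / ε * (A ^ 2 / R₀ ^ 2 - 1) ≤ -(4 / (s * R₀)) * t := by
    have hq0 : q (r₀ x) ≤ 0 := le_trans hqle (by linarith)
    have h1 : q (r₀ x) * (A ^ 2 / R₀ ^ 2 - 1) ≤ -t * (2 * s / R₀) := by
      calc q (r₀ x) * (A ^ 2 / R₀ ^ 2 - 1) ≤ q (r₀ x) * (2 * s / R₀) := by
            apply mul_le_mul_of_nonpos_left hB hq0
        _ ≤ -t * (2 * s / R₀) := by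
            apply mul_le_mul_of_nonneg_right hqle (by positivity)
    have hrw : -(4 / (s * R₀)) * t = 2 / ε * (-t * (2 * s / R₀)) := by
      field_simp
      rw [← hs2]; ring
    rw [hrw]
    rw [mul_comm 2 (q (r₀ x)), mul_div_assoc, mul_comm (q (r₀ x)) (2/ε), mul_assoc]
    exact mul_le_mul_of_nonneg_left h1 (by positivity)
  exact key
end
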